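/- arXiv:2504.04937 — 3 statements merged into one kernel-verified Lean document; each statement's English description precedes it below -/
import Mathlib

section
/- Let h₀, h₁ : ℝ≥0 → ℝ be continuously differentiable functions with h₁ = ḣ₀ + α₀ ∘ h₀ for a locally Lipschitz extended class-K function α₀ (strictly increasing with α₀(0) = 0). If h₁(t) ≤ 0 for all t ≥ 0 and h₀(0) ≤ 0, then h₀(t) ≤ 0 for all t ≥ 0. -/
open Real

/-- High-order CBF comparison lemma: if `h₁ = ḣ₀ + α₀ ∘ h₀ ≤ 0` on `[0, ∞)` for a locally
Lipschitz extended class-`K` function `α₀`, and `h₀ 0 ≤ 0`, then `h₀ t ≤ 0` for all `t ≥ 0`. -/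
theorem hocbf_comparison (h₀ h₁ α₀ : ℝ → ℝ)
    (hC1 : ContDiff ℝ 1 h₀)
    (hα_lip : LocallyLipschitz α₀) (hα_mono : StrictMono α₀) (hα0 : α₀ 0 = 0)
    (hdef : ∀ t, h₁ t = deriv h₀ t + α₀ (h₀ t))
    (hle : ∀ t ≥ 0, h₁ t ≤ 0) (h0 : h₀ 0 ≤ 0) :
    ∀ t ≥ 0, h₀ t ≤ 0 := by
  intro T hT
  by_contra hpos
  push_neg at hpos
  have hcont : Continuous h₀ := hC1.continuous
  set K : Set ℝ := Set.Icc 0 T ∩ h₀ ⁻¹' Set.Iic 0 with hK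
  have hKc : IsCompact K :=
    (isCompact_Icc).inter_right (isClosed_Iic.preimage hcont)
  have h0K : (0 : ℝ) ∈ K := ⟨⟨le_refl 0, hT⟩, h0⟩
  have hKne : K.Nonempty := ⟨0, h0K⟩
  set S := sSup K with hS
  have hSK : S ∈ K := hKc.sSup_mem hKne
  obtain ⟨⟨hS0, hST⟩, hSle⟩ := hSK
  have hSneT : S ≠ T := by
    intro h; rw [h] at hSle; exact absurd hpos (not_lt.mpr hSle)
  have hSltT : S < T := lt_of_le_of_ne hST hSneT
  have hmid : ∀ t ∈ Set.Ioc S T, 0 < h₀ t := by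
    intro t ⟨ht1, ht2⟩
    by_contra h
    push_neg at h
    have : t ∈ K := ⟨⟨le_trans hS0 ht1.le, ht2⟩, h⟩
    exact absurd (le_csSup hKc.bddAbove this) (not_le.mpr ht1)
  have hanti : StrictAntiOn h₀ (Set.Icc S T) := by
    apply strictAntiOn_of_deriv_neg (convex_Icc S T) hcont.continuousOn
    intro t ht
    rw [interior_Icc] at ht
    have htpos : 0 < h₀ t := hmid t ⟨ht.1, ht.2.le⟩
    have ht0 : (0 : ℝ) ≤ t := le_trans hS0 ht.1.le
    have := hle t ht0
    rw [hdef t] at this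
    have hα : 0 < α₀ (h₀ t) := by
      have := hα_mono htpos
      rwa [hα0] at this
    linarith
  have := hanti (Set.left_mem_Icc.mpr hST) (Set.right_mem_Icc.mpr hST) hSltT
  have hSle' : h₀ S ≤ 0 := hSle
  linarith
end

section
/- Let q ∈ {−1, 1}, θ > 0, p ∈ ℝ² \ {0}, v_i, v_j ∈ ℝ², and define h₁ = 2 p^T (v_i − v_j) + α and h₂(q) = 2 p^T R(qθ) v_i − 2 p^T v_j + α + 4‖p‖‖v_i‖ sin(θ), where α ∈ ℝ. If 0 < θ < π/2, then h₁ ≤ h₂(q) for both values of q. -/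
/-!
Rotating `v` by `φ` gives `p ⬝ v - p ⬝ R(φ) v = (1 - cos φ) (p ⬝ v) - sin φ (p × v)`. By the
Lagrange identity `(p ⬝ v)² + (p × v)² = ‖p‖² ‖v‖²` both products are bounded by `‖p‖ ‖v‖`, so the
difference is at most `(1 - cos φ + |sin φ|) ‖p‖ ‖v‖`. For `φ = ±θ` with `θ` in the first quadrant
this is at most `2 ‖p‖ ‖v‖ sin θ`, because there `1 - cos θ ≤ sin θ`.
-/

open Real Matrix

/-- Counterclockwise rotation matrix by angle `θ`. -/
noncomputable def Rot (θ : ℝ) : Matrix (Fin 2) (Fin 2) ℝ :=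
  !![Real.cos θ, -Real.sin θ; Real.sin θ, Real.cos θ]

theorem dotProduct_rot_mulVec (φ : ℝ) (p v : Fin 2 → ℝ) :
    p ⬝ᵥ (Rot φ *ᵥ v) = cos φ * (p ⬝ᵥ v) + sin φ * (p 1 * v 0 - p 0 * v 1) := by
  simp only [Rot, dotProduct, mulVec, Fin.sum_univ_two, of_apply, cons_val', cons_val_zero,
    cons_val_one, empty_val', cons_val_fin_one]
  ring

theorem dotProduct_sq_add_cross_sq (p v : EuclideanSpace ℝ (Fin 2)) :
    (p.ofLp ⬝ᵥ v.ofLp) ^ 2 + (p 1 * v 0 - p 0 * v 1) ^ 2 = ‖p‖ ^ 2 * ‖v‖ ^ 2 := by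
  simp only [EuclideanSpace.real_norm_sq_eq, dotProduct, Fin.sum_univ_two]
  ring

theorem dotProduct_sub_rot_mulVec_le (φ : ℝ) (p v : EuclideanSpace ℝ (Fin 2)) :
    p.ofLp ⬝ᵥ v.ofLp - p.ofLp ⬝ᵥ (Rot φ *ᵥ v.ofLp) ≤ (1 - cos φ + |sin φ|) * (‖p‖ * ‖v‖) := by
  set dot := p.ofLp ⬝ᵥ v.ofLp
  set cross := p 1 * v 0 - p 0 * v 1
  have hlagrange : dot ^ 2 + cross ^ 2 = (‖p‖ * ‖v‖) ^ 2 := by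
    rw [mul_pow]; exact dotProduct_sq_add_cross_sq p v
  have hPV : 0 ≤ ‖p‖ * ‖v‖ := by positivity
  have hdot : |dot| ≤ ‖p‖ * ‖v‖ := abs_le_of_sq_le_sq (by nlinarith [sq_nonneg cross]) hPV
  have hcross : |cross| ≤ ‖p‖ * ‖v‖ := abs_le_of_sq_le_sq (by nlinarith [sq_nonneg dot]) hPV
  have hcos : 0 ≤ 1 - cos φ := sub_nonneg.2 (cos_le_one φ)
  calc dot - p.ofLp ⬝ᵥ (Rot φ *ᵥ v.ofLp) = (1 - cos φ) * dot - sin φ * cross := by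
        rw [dotProduct_rot_mulVec]; ring
    _ ≤ (1 - cos φ) * |dot| + |sin φ * cross| := by
        rw [sub_eq_add_neg]
        exact add_le_add (mul_le_mul_of_nonneg_left (le_abs_self _) hcos) (neg_le_abs _)
    _ ≤ (1 - cos φ + |sin φ|) * (‖p‖ * ‖v‖) := by
        rw [abs_mul, add_mul]; gcongr

-- `cos θ + sin θ ≥ cos² θ + sin² θ = 1` since both lie in `[0, 1]`.
theorem one_sub_cos_le_sin {θ : ℝ} (h0 : 0 ≤ θ) (h1 : θ ≤ π / 2) : 1 - cos θ ≤ sin θ := by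
  have hc := cos_nonneg_of_mem_Icc ⟨by linarith [pi_pos], h1⟩
  have hs := sin_nonneg_of_nonneg_of_le_pi h0 (by linarith [pi_pos])
  nlinarith [cos_sq_add_sin_sq θ, cos_le_one θ, sin_le_one θ]

theorem h1_le_h2_general (q : ℝ) (hq : q = 1 ∨ q = -1) (θ : ℝ) (hθ : 0 < θ) (hθ' : θ < π / 2)
    (p vi vj : EuclideanSpace ℝ (Fin 2)) (α : ℝ) :
    2 * ((fun i => p i) ⬝ᵥ fun i => (vi - vj) i) + α ≤
      2 * ((fun i => p i) ⬝ᵥ (Rot (q * θ) *ᵥ fun i => vi i)) -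
        2 * ((fun i => p i) ⬝ᵥ fun i => vj i) + α + 4 * ‖p‖ * ‖vi‖ * Real.sin θ := by
  have hsin : 0 ≤ sin θ := sin_nonneg_of_nonneg_of_le_pi hθ.le (by linarith [pi_pos])
  have hcos_q : cos (q * θ) = cos θ := by rcases hq with rfl | rfl <;> simp
  have hsin_q : |sin (q * θ)| = sin θ := by
    rcases hq with rfl | rfl <;> simp [abs_of_nonneg hsin]
  have hrot := dotProduct_sub_rot_mulVec_le (q * θ) p vi
  rw [hcos_q, hsin_q] at hrot
  have hangle := mul_le_mul_of_nonneg_right (one_sub_cos_le_sin hθ.le hθ'.le)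
    (by positivity : 0 ≤ ‖p‖ * ‖vi‖)
  have hsplit : (p.ofLp ⬝ᵥ fun i => (vi - vj) i) = p.ofLp ⬝ᵥ vi.ofLp - p.ofLp ⬝ᵥ vj.ofLp :=
    dotProduct_sub _ _ _
  linarith

/-- The synergistic CBF `h₂(q)` upper-bounds the nonhybrid candidate `h₁` for both values
of the discrete variable `q ∈ {−1, 1}` when `0 < θ < π/2`. -/
theorem h1_le_h2 (q : ℝ) (hq : q = 1 ∨ q = -1) (θ : ℝ) (hθ : 0 < θ) (hθ' : θ < π / 2)
    (p vi vj : EuclideanSpace ℝ (Fin 2)) (hp : p ≠ 0) (α : ℝ) :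
    2 * ((fun i => p i) ⬝ᵥ fun i => (vi - vj) i) + α ≤
      2 * ((fun i => p i) ⬝ᵥ (Rot (q * θ) *ᵥ fun i => vi i)) -
        2 * ((fun i => p i) ⬝ᵥ fun i => vj i) + α + 4 * ‖p‖ * ‖vi‖ * Real.sin θ :=
  h1_le_h2_general q hq θ hθ hθ' p vi vj α
end

section
/- Suppose h₂ : X × {−1,1} → ℝ and define m₂(x) = min over q ∈ {−1,1} of h₂(x, q). If for q = +1 and every x in the critical set Z⁺ we have h₂(x, +1) − h₂(x, −1) = 2 u d n_p^T (R(θ) − R(θ)^T) n where n_p^T R(θ) n = 1, ‖n_p‖ = ‖n‖ = 1, u ≥ u_min > 0, d ≥ d_min > 0, and 0 < θ < π/2, then h₂(x, +1) − m₂(x) ≥ 2 u_min d_min (1 − cos(2θ)) > 0 for all x ∈ Z⁺. -/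
open Real Matrix

/-- Positive synergy gap (Proposition 2): at every critical state `x ∈ Z⁺` where the
difference `h₂(x,+1) − h₂(x,−1)` equals `2 u d n_pᵀ (R(θ) − R(θ)ᵀ) n` with aligned unit
vectors (`n_pᵀ R(θ) n = 1`), the gap `h₂(x,+1) − m₂(x)` is at least
`2 u_min d_min (1 − cos 2θ) > 0`. -/
theorem synergy_gap_bound {X : Type*} (h₂ : X → ℝ → ℝ) (Zp : Set X)
    (u d : X → ℝ) (np n : X → EuclideanSpace ℝ (Fin 2)) (θ umin dmin : ℝ)
    (humin : 0 < umin) (hdmin : 0 < dmin) (hθ : 0 < θ) (hθ' : θ < π / 2)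
    (hdiff : ∀ x ∈ Zp, h₂ x 1 - h₂ x (-1) =
      2 * u x * d x * ((fun i => np x i) ⬝ᵥ ((Rot θ - (Rot θ)ᵀ) *ᵥ fun i => n x i)))
    (halign : ∀ x ∈ Zp, (fun i => np x i) ⬝ᵥ (Rot θ *ᵥ fun i => n x i) = 1)
    (hnp : ∀ x ∈ Zp, ‖np x‖ = 1) (hn : ∀ x ∈ Zp, ‖n x‖ = 1)
    (hu : ∀ x ∈ Zp, u x ≥ umin) (hd : ∀ x ∈ Zp, d x ≥ dmin) :
    (∀ x ∈ Zp, h₂ x 1 - min (h₂ x 1) (h₂ x (-1)) ≥ 2 * umin * dmin * (1 - Real.cos (2 * θ))) ∧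
    2 * umin * dmin * (1 - Real.cos (2 * θ)) > 0 := by
  have hsin : 0 < Real.sin θ := Real.sin_pos_of_pos_of_lt_pi hθ
    (lt_trans hθ' (by linarith [Real.pi_pos]))
  have hcos2 : 1 - Real.cos (2 * θ) = 2 * Real.sin θ ^ 2 := by
    rw [Real.cos_two_mul']
    nlinarith [Real.sin_sq_add_cos_sq θ]
  have hpos : 2 * umin * dmin * (1 - Real.cos (2 * θ)) > 0 := by
    rw [hcos2]; positivity
  refine ⟨fun x hx => ?_, hpos⟩
  -- unit norms
  have hnp1 : np x 0 ^ 2 + np x 1 ^ 2 = 1 := by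
    have h1 := hnp x hx
    rw [EuclideanSpace.norm_eq] at h1
    have h2 := Real.sqrt_eq_one.mp h1
    simpa [Fin.sum_univ_two, sq_abs] using h2
  have hn1 : n x 0 ^ 2 + n x 1 ^ 2 = 1 := by
    have h1 := hn x hx
    rw [EuclideanSpace.norm_eq] at h1
    have h2 := Real.sqrt_eq_one.mp h1
    simpa [Fin.sum_univ_two, sq_abs] using h2
  set A : ℝ := np x 0 * n x 0 + np x 1 * n x 1 with hA
  set B : ℝ := np x 1 * n x 0 - np x 0 * n x 1 with hB
  have hAB : A ^ 2 + B ^ 2 = 1 := by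
    have : A ^ 2 + B ^ 2 = (np x 0 ^ 2 + np x 1 ^ 2) * (n x 0 ^ 2 + n x 1 ^ 2) := by
      ring
    rw [this, hnp1, hn1, mul_one]
  have halign' : Real.cos θ * A + Real.sin θ * B = 1 := by
    have := halign x hx
    simp [Rot, Matrix.mulVec, dotProduct, Fin.sum_univ_two] at this
    rw [hA, hB]; linarith [this]
  have hBsin : B = Real.sin θ := by
    nlinarith [sq_nonneg (A - Real.cos θ), sq_nonneg (B - Real.sin θ),
      Real.sin_sq_add_cos_sq θ]
  have hdot : (fun i => np x i) ⬝ᵥ ((Rot θ - (Rot θ)ᵀ) *ᵥ fun i => n x i)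
      = 1 - Real.cos (2 * θ) := by
    have hT : (Rot θ)ᵀ = !![Real.cos θ, Real.sin θ; -Real.sin θ, Real.cos θ] := by
      ext i j
      fin_cases i <;> fin_cases j <;> simp [Rot]
    rw [hT]
    simp [Rot, Matrix.mulVec, dotProduct, Fin.sum_univ_two, Matrix.sub_apply]
    rw [hcos2]
    nlinarith [hBsin]
  have hdiffx := hdiff x hx
  rw [hdot] at hdiffx
  have hbound : 2 * umin * dmin * (1 - Real.cos (2 * θ)) ≤
      2 * u x * d x * (1 - Real.cos (2 * θ)) := by
    have h1c : 0 < 1 - Real.cos (2 * θ) := by rw [hcos2]; positivity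
    have hux := hu x hx
    have hdx := hd x hx
    have hud : umin * dmin ≤ u x * d x :=
      mul_le_mul hux hdx hdmin.le (humin.le.trans hux)
    have h2 := mul_le_mul_of_nonneg_right hud h1c.le
    nlinarith [h2]
  have hu0 : 0 < u x := lt_of_lt_of_le humin (hu x hx)
  have hd0 : 0 < d x := lt_of_lt_of_le hdmin (hd x hx)
  have h1c : 0 < 1 - Real.cos (2 * θ) := by rw [hcos2]; positivity
  have hp : 0 < 2 * u x * d x * (1 - Real.cos (2 * θ)) := by positivity
  have hlt : h₂ x (-1) < h₂ x 1 := by linarith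
  rw [min_eq_right (le_of_lt hlt)]
  linarith
end
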